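/- Let m ≥ 1 be a natural number and let ν : Fin m → ℝ satisfy ν j ≥ 1 for every j. Then ∑_j f(ν j) < ∑_j (ν j − 1) + m, where f(ν) = ((ν+1)/2)·log((ν+1)/2) − ((ν−1)/2)·log((ν−1)/2) and log is the natural logarithm (with Real.log 0 = 0 making the formula literal at ν = 1). -/

import Mathlib

/-!
Write `ν = 2b + 1` with `b ≥ 0`. Then
`f ν = (b + 1) log (b + 1) - b log b = log (b + 1) + b (log (b + 1) - log b)`,
and `log x ≤ x - 1` bounds the first term by `b` and the second strictly by `1`
(at `x = (b + 1) / b`). Hence `f ν < b + 1 ≤ ν` for each mode, and summing over the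
`m ≥ 1` modes gives `∑ f (ν j) < ∑ ν j = ∑ (ν j - 1) + m`.
-/

open Real

/-- The von Neumann entropy of a thermal mode with symplectic eigenvalue `ν`. -/
noncomputable def symplecticEntropy (ν : ℝ) : ℝ :=
  (ν + 1) / 2 * log ((ν + 1) / 2) - (ν - 1) / 2 * log ((ν - 1) / 2)

lemma mul_log_add_one_sub_log_lt_one {b : ℝ} (hb : 0 ≤ b) :
    b * (log (b + 1) - log b) < 1 := by
  rcases hb.eq_or_lt with rfl | hb
  · simp
  have hne : (b + 1) / b ≠ 1 := by
    rw [Ne, div_eq_one_iff_eq hb.ne']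
    linarith
  calc b * (log (b + 1) - log b) = b * log ((b + 1) / b) := by
        rw [log_div (by positivity) hb.ne']
    _ < b * ((b + 1) / b - 1) := by
        gcongr
        exact log_lt_sub_one_of_pos (by positivity) hne
    _ = 1 := by field_simp; ring

lemma add_one_mul_log_add_one_sub_mul_log_lt {b : ℝ} (hb : 0 ≤ b) :
    (b + 1) * log (b + 1) - b * log b < b + 1 := by
  have hlog : log (b + 1) ≤ b := by
    linarith [log_le_sub_one_of_pos (show 0 < b + 1 by positivity)]
  linear_combination hlog + mul_log_add_one_sub_log_lt_one hb

lemma symplecticEntropy_lt_self {ν : ℝ} (hν : 1 ≤ ν) : symplecticEntropy ν < ν := by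
  have key := add_one_mul_log_add_one_sub_mul_log_lt (b := (ν - 1) / 2) (by linarith)
  rw [show (ν - 1) / 2 + 1 = (ν + 1) / 2 by ring] at key
  unfold symplecticEntropy
  linarith

/-- For m ≥ 1 and ν j ≥ 1 for all j, ∑ f(ν j) < ∑ (ν j − 1) + m, where
f(ν) = ((ν+1)/2) log((ν+1)/2) − ((ν−1)/2) log((ν−1)/2). -/
theorem sum_entropy_lt_gap_add_modes (m : ℕ) (hm : 1 ≤ m) (ν : Fin m → ℝ)
    (hν : ∀ j, 1 ≤ ν j) :
    ∑ j, (((ν j + 1) / 2) * Real.log ((ν j + 1) / 2) -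
        ((ν j - 1) / 2) * Real.log ((ν j - 1) / 2)) <
      ∑ j, (ν j - 1) + m := by
  have : Nonempty (Fin m) := ⟨⟨0, hm⟩⟩
  calc ∑ j, symplecticEntropy (ν j) < ∑ j, ν j :=
        Finset.sum_lt_sum_of_nonempty Finset.univ_nonempty
          fun j _ => symplecticEntropy_lt_self (hν j)
    _ = ∑ j, (ν j - 1) + m := by simp [Finset.sum_sub_distrib]
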